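/- Let V : E → E be a differentiable vector field and f : E → ℝ a function such that curl V (x) = f x • V x for all x (V is a Beltrami field). Then for every x : E, fderiv ℝ V x (V x) = (1/2 : ℝ) • gradient (fun y => ‖V y‖^2) x. In particular, V is the velocity field of a stationary motion of an ideal incompressible fluid, with pressure p = −½‖V‖². -/

import Mathlib

/-!
Write `A = fderiv ℝ V x`. The gradient of `‖V‖²` is `2 A† V`, and the antisymmetric part
`A - A†` acts as `v ↦ curl V x ×₃ v`, so `A V - ½ grad ‖V‖² = curl V x ×₃ V` (Lamb's identity).
For a Beltrami field this cross product is `f x • (V x ×₃ V x) = 0`.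
-/

open MeasureTheory RealInnerProductSpace

noncomputable section

abbrev E : Type := EuclideanSpace ℝ (Fin 3)

/-- The `i`-th standard basis vector of `E`. -/
def e (i : Fin 3) : E := EuclideanSpace.single i 1

/-- The curl (vorticity) of a vector field on `E`. -/
def curl (X : E → E) (x : E) : E :=
  (WithLp.equiv 2 (Fin 3 → ℝ)).symm
    ![fderiv ℝ X x (e 1) 2 - fderiv ℝ X x (e 2) 1,
      fderiv ℝ X x (e 2) 0 - fderiv ℝ X x (e 0) 2,
      fderiv ℝ X x (e 0) 1 - fderiv ℝ X x (e 1) 0]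

/-- The divergence of a vector field on `E`. -/
def div (X : E → E) (x : E) : ℝ := ∑ i, fderiv ℝ X x (e i) i

/-- The cross product on `E`. -/
def cross (a b : E) : E :=
  (WithLp.equiv 2 (Fin 3 → ℝ)).symm
    ![a 1 * b 2 - a 2 * b 1,
      a 2 * b 0 - a 0 * b 2,
      a 0 * b 1 - a 1 * b 0]

infixl:74 " ×₃ " => cross

def axialVector (A : E →L[ℝ] E) : E :=
  (WithLp.equiv 2 (Fin 3 → ℝ)).symm
    ![A (e 1) 2 - A (e 2) 1, A (e 2) 0 - A (e 0) 2, A (e 0) 1 - A (e 1) 0]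

theorem curl_eq_axialVector_fderiv (X : E → E) (x : E) :
    curl X x = axialVector (fderiv ℝ X x) := rfl

theorem cross_eq_crossProduct (a b : E) :
    a ×₃ b = WithLp.toLp 2 (crossProduct (WithLp.ofLp a) (WithLp.ofLp b)) := by
  rw [cross, cross_apply]
  rfl

theorem smul_cross_self (c : ℝ) (a : E) : (c • a) ×₃ a = 0 := by
  rw [cross_eq_crossProduct, WithLp.ofLp_smul, map_smul, LinearMap.smul_apply, cross_self,
    smul_zero, WithLp.toLp_zero]

theorem apply_eq_sum_mul_apply_e (A : E →L[ℝ] E) (v : E) (i : Fin 3) :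
    A v i = ∑ j, v j * A (e j) i := by
  conv_lhs => rw [← (EuclideanSpace.basisFun (Fin 3) ℝ).sum_repr v]
  simp [e, map_sum, map_smul]

theorem adjoint_apply_eq_sum_mul (A : E →L[ℝ] E) (v : E) (i : Fin 3) :
    ContinuousLinearMap.adjoint A v i = ∑ j, v j * A (e i) j := by
  have h := ContinuousLinearMap.adjoint_inner_right A (e i) v
  rwa [e, EuclideanSpace.inner_single_left, map_one, one_mul, ← e, PiLp.inner_apply] at h

theorem apply_sub_adjoint_apply (A : E →L[ℝ] E) (v : E) :
    A v - ContinuousLinearMap.adjoint A v = axialVector A ×₃ v := by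
  ext i
  rw [PiLp.sub_apply, apply_eq_sum_mul_apply_e, adjoint_apply_eq_sum_mul]
  fin_cases i <;> simp [axialVector, cross, Fin.sum_univ_three] <;> ring

theorem gradient_norm_sq {F G : Type*} [NormedAddCommGroup F] [InnerProductSpace ℝ F]
    [CompleteSpace F] [NormedAddCommGroup G] [InnerProductSpace ℝ G] [CompleteSpace G]
    {V : F → G} {x : F} (hV : DifferentiableAt ℝ V x) :
    gradient (fun y => ‖V y‖ ^ 2) x =
      (2 : ℝ) • ContinuousLinearMap.adjoint (fderiv ℝ V x) (V x) := by
  have hdual : InnerProductSpace.toDual ℝ F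
      ((2 : ℝ) • ContinuousLinearMap.adjoint (fderiv ℝ V x) (V x)) =
      2 • (innerSL ℝ (V x)).comp (fderiv ℝ V x) := by
    ext v
    simp [ContinuousLinearMap.adjoint_inner_left, two_mul]
  refine HasGradientAt.gradient (hasGradientAt_iff_hasFDerivAt.2 ?_)
  rw [hdual]
  exact hV.hasFDerivAt.norm_sq

theorem beltrami_stationary (V : E → E) (f : E → ℝ) (hV : Differentiable ℝ V)
    (hBeltrami : ∀ x, curl V x = f x • V x) (x : E) :
    fderiv ℝ V x (V x) = (1/2 : ℝ) • gradient (fun y => ‖V y‖^2) x := by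
  have hskew := apply_sub_adjoint_apply (fderiv ℝ V x) (V x)
  rw [← curl_eq_axialVector_fderiv, hBeltrami, smul_cross_self, sub_eq_zero] at hskew
  rw [gradient_norm_sq (hV x), smul_smul, ← hskew]
  norm_num
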